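/- If p is a monic real polynomial of degree n satisfying the generalized eigenvalue equation (x - a^{-1}q) p(qx) + (a^{-1}q - b^{-1}x) p(x) = λ ( (x - q) p(q^{-1}x) + (q - bx) p(x) ) for all real x and some real number λ, then necessarily λ = -b^{-1} q^n and p equals the monic Pastro polynomial P_n(x;a,b;q). -/

import Mathlib

/-- The q-Pochhammer symbol `(z;q)_k = ∏_{j=0}^{k-1} (1 - z q^j)`. -/
noncomputable def qPoch (q z : ℝ) (k : ℕ) : ℝ :=
  ∏ j ∈ Finset.range k, (1 - z * q ^ j)

/-- Coefficient `c_{n,k}` of the monic Pastro polynomial. -/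
noncomputable def pastroCoeff (q a b : ℝ) (n k : ℕ) : ℝ :=
  (qPoch q (a⁻¹ * b * q ^ (1 - (n : ℤ))) n * qPoch q q n /
      (qPoch q (q ^ (-(n : ℤ))) n * qPoch q b n)) *
    (qPoch q (q ^ (-(n : ℤ))) k * qPoch q b k /
      (qPoch q (a⁻¹ * b * q ^ (1 - (n : ℤ))) k * qPoch q q k))

/-- The monic Pastro polynomial `P_n(x;a,b;q)`. -/
noncomputable def pastroP (q a b : ℝ) (n : ℕ) (x : ℝ) : ℝ :=
  ∑ k ∈ Finset.range (n + 1), pastroCoeff q a b n k * x ^ k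

/-! Comparing coefficients of `x ^ (k + 1)` in the eigenvalue equation gives a relation between
`c k` and `c (k + 1)` only. At `k = n` it forces `λ = -b⁻¹ qⁿ`, and with this `λ` it becomes
the two-term recurrence
  `c k (qⁿ⁻ᵏ - 1) (b⁻¹ - qᵏ) = c (k + 1) (1 - qᵏ⁺¹) (b⁻¹ qⁿ⁻ᵏ - a⁻¹ q)`,
whose left factor does not vanish for `k < n`. The Pastro coefficients satisfy the same recurrence
(one extra factor per `q`-Pochhammer symbol), so descending induction from `c n = 1` identifies
the coefficients of `p` with those of `P_n`. -/

open Polynomial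

lemma eq_of_le_of_mul_eq_succ_mul {M : Type*} [MonoidWithZero M] [IsCancelMulZero M]
    {u v A B : ℕ → M} {n : ℕ} (hA : ∀ k < n, A k ≠ 0)
    (hu : ∀ k < n, u k * A k = u (k + 1) * B k)
    (hv : ∀ k < n, v k * A k = v (k + 1) * B k) (hn : u n = v n) {m : ℕ} (hm : m ≤ n) :
    u m = v m := by
  induction hm using Nat.decreasingInduction with
  | self => exact hn
  | of_succ k hk ih => exact mul_right_cancel₀ (hA k hk) (by rw [hu k hk, hv k hk, ih])

section QPochhammer

variable {q z : ℝ}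

lemma qPoch_succ (q z : ℝ) (k : ℕ) : qPoch q z (k + 1) = qPoch q z k * (1 - z * q ^ k) :=
  Finset.prod_range_succ _ k

lemma qPoch_ne_zero {k : ℕ} (h : ∀ j < k, z * q ^ j ≠ 1) : qPoch q z k ≠ 0 :=
  Finset.prod_ne_zero_iff.2 fun j hj => sub_ne_zero.2 (h j (Finset.mem_range.1 hj)).symm

lemma qPoch_self_ne_zero (hq1 : ∀ k : ℤ, k ≠ 0 → q ^ k ≠ 1) (k : ℕ) :
    qPoch q q k ≠ 0 :=
  qPoch_ne_zero fun j _ => by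
    rw [← pow_succ', ← zpow_natCast]
    exact hq1 _ (by omega)

lemma qPoch_zpow_neg_ne_zero (hq : q ≠ 0) (hq1 : ∀ k : ℤ, k ≠ 0 → q ^ k ≠ 1) {n k : ℕ}
    (hk : k ≤ n) : qPoch q (q ^ (-(n : ℤ))) k ≠ 0 :=
  qPoch_ne_zero fun j hj => by
    simpa [zpow_add₀ hq] using hq1 (-n + j) (by omega)

lemma qPoch_ne_zero_of_mul_zpow_ne_one (h : ∀ m : ℤ, z * q ^ m ≠ 1) (k : ℕ) :
    qPoch q z k ≠ 0 :=
  qPoch_ne_zero fun j _ => by simpa using h j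

lemma qPoch_mul_zpow_ne_zero (hq : q ≠ 0) (h : ∀ m : ℤ, z * q ^ m ≠ 1) (e : ℤ) (k : ℕ) :
    qPoch q (z * q ^ e) k ≠ 0 :=
  qPoch_ne_zero fun j _ => by simpa [mul_assoc, zpow_add₀ hq] using h (e + j)

end QPochhammer

section PastroCoeff

variable {q a b : ℝ}

lemma pastroCoeff_self (hq : q ≠ 0) (hq1 : ∀ k : ℤ, k ≠ 0 → q ^ k ≠ 1)
    (hbq : ∀ m : ℤ, b * q ^ m ≠ 1) (habq : ∀ m : ℤ, a⁻¹ * b * q ^ m ≠ 1) (n : ℕ) :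
    pastroCoeff q a b n n = 1 := by
  rw [pastroCoeff, div_mul_div_cancel₀ (mul_ne_zero (qPoch_zpow_neg_ne_zero hq hq1 le_rfl)
    (qPoch_ne_zero_of_mul_zpow_ne_one hbq n))]
  exact div_self (mul_ne_zero (qPoch_mul_zpow_ne_zero hq habq _ n) (qPoch_self_ne_zero hq1 n))

lemma pastroCoeff_succ (n k : ℕ) :
    pastroCoeff q a b n (k + 1) = pastroCoeff q a b n k *
      ((1 - q ^ (-(n : ℤ)) * q ^ k) * (1 - b * q ^ k)) /
        ((1 - a⁻¹ * b * q ^ (1 - (n : ℤ)) * q ^ k) * (1 - q * q ^ k)) := by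
  simp only [pastroCoeff, qPoch_succ]
  -- otherwise `ring` expands these factors under the inverse and cannot regroup them
  generalize 1 - a⁻¹ * b * q ^ (1 - (n : ℤ)) * q ^ k = x, 1 - q * q ^ k = y
  ring

lemma pastroCoeff_mul_eq_succ_mul (hq : q ≠ 0) (hq1 : ∀ k : ℤ, k ≠ 0 → q ^ k ≠ 1)
    (hb : b ≠ 0) (habq : ∀ m : ℤ, a⁻¹ * b * q ^ m ≠ 1) {n k : ℕ} (hk : k < n) :
    pastroCoeff q a b n k * ((q ^ (n - k) - 1) * (b⁻¹ - q ^ k)) =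
      pastroCoeff q a b n (k + 1) * ((1 - q ^ (k + 1)) * (b⁻¹ * q ^ (n - k) - a⁻¹ * q)) := by
  have hden : (1 - a⁻¹ * b * q ^ (1 - (n : ℤ)) * q ^ k) * (1 - q * q ^ k) ≠ 0 := by
    have h₁ := qPoch_mul_zpow_ne_zero hq habq (1 - n) (k + 1)
    have h₂ := qPoch_self_ne_zero hq1 (k + 1)
    rw [qPoch_succ] at h₁ h₂
    exact mul_ne_zero (right_ne_zero_of_mul h₁) (right_ne_zero_of_mul h₂)
  have hrec := pastroCoeff_succ (q := q) (a := a) (b := b) n k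
  rw [eq_div_iff_mul_eq hden] at hrec
  have hfactor : (q ^ (n - k) - 1) * (b⁻¹ - q ^ k) *
        ((1 - a⁻¹ * b * q ^ (1 - (n : ℤ)) * q ^ k) * (1 - q * q ^ k)) =
      (1 - q ^ (k + 1)) * (b⁻¹ * q ^ (n - k) - a⁻¹ * q) *
        ((1 - q ^ (-(n : ℤ)) * q ^ k) * (1 - b * q ^ k)) := by
    have hn : q ^ n = q ^ k * q ^ (n - k) := by rw [← pow_add, Nat.add_sub_cancel' hk.le]
    rw [zpow_neg, zpow_sub₀ hq, zpow_one, zpow_natCast, hn]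
    field_simp
    ring
  apply mul_right_cancel₀ hden
  linear_combination pastroCoeff q a b n k * hfactor -
    (1 - q ^ (k + 1)) * (b⁻¹ * q ^ (n - k) - a⁻¹ * q) * hrec

end PastroCoeff

def IsPastroGEVPSolution (q a b lam : ℝ) (p : ℝ[X]) : Prop :=
  ∀ x : ℝ, (x - a⁻¹ * q) * p.eval (q * x) + (a⁻¹ * q - b⁻¹ * x) * p.eval x =
    lam * ((x - q) * p.eval (q⁻¹ * x) + (q - b * x) * p.eval x)

section EigenvalueProblem

variable {q a b lam : ℝ} {p : ℝ[X]}

lemma coeff_succ_of_eigen (hq : q ≠ 0) (heq : IsPastroGEVPSolution q a b lam p) (k : ℕ) :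
    (q ^ k - b⁻¹) * p.coeff k + a⁻¹ * q * (1 - q ^ (k + 1)) * p.coeff (k + 1) =
      lam * ((q⁻¹ ^ k - b) * p.coeff k + (q - q⁻¹ ^ k) * p.coeff (k + 1)) := by
  have hpoly : (X - C (a⁻¹ * q)) * p.comp (C q * X) + (C (a⁻¹ * q) - C b⁻¹ * X) * p =
      C lam * ((X - C q) * p.comp (C q⁻¹ * X) + (C q - C b * X) * p) :=
    Polynomial.funext fun x => by simpa using heq x
  have hcoeff := congrArg (coeff · (k + 1)) hpoly
  simp only [sub_mul, mul_add, mul_sub, mul_assoc, coeff_add, coeff_sub, coeff_C_mul,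
    coeff_X_mul, comp_C_mul_X_coeff] at hcoeff
  linear_combination hcoeff - lam * p.coeff (k + 1) * q⁻¹ ^ k * mul_inv_cancel₀ hq

lemma eigenvalue_eq_of_monic (hq : q ≠ 0) (hb : b ≠ 0) (hbq : ∀ m : ℤ, b * q ^ m ≠ 1)
    (heq : IsPastroGEVPSolution q a b lam p) {n : ℕ} (hmonic : p.Monic)
    (hdeg : p.natDegree = n) : lam = -b⁻¹ * q ^ n := by
  have hlead : p.coeff n = 1 := hdeg ▸ hmonic.coeff_natDegree
  have htop : p.coeff (n + 1) = 0 := coeff_eq_zero_of_natDegree_lt (by omega)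
  have h := coeff_succ_of_eigen hq heq n
  simp only [hlead, htop, mul_zero, add_zero, mul_one] at h
  have hqn : q ^ n * q⁻¹ ^ n = 1 := by rw [← mul_pow, mul_inv_cancel₀ hq, one_pow]
  have hD : q⁻¹ ^ n - b ≠ 0 := sub_ne_zero.2 fun hbn => hbq n <| by
    rw [zpow_natCast, ← hbn, mul_comm, hqn]
  apply mul_right_cancel₀ hD
  linear_combination -h + b⁻¹ * hqn - q ^ n * inv_mul_cancel₀ hb

lemma coeff_mul_eq_succ_mul_of_eigen (hq : q ≠ 0) (hb : b ≠ 0)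
    (heq : IsPastroGEVPSolution q a b lam p) {n k : ℕ} (hlam : lam = -b⁻¹ * q ^ n)
    (hk : k ≤ n) :
    p.coeff k * ((q ^ (n - k) - 1) * (b⁻¹ - q ^ k)) =
      p.coeff (k + 1) * ((1 - q ^ (k + 1)) * (b⁻¹ * q ^ (n - k) - a⁻¹ * q)) := by
  have h := coeff_succ_of_eigen hq heq k
  rw [hlam, inv_pow] at h
  rw [pow_sub₀ q hq hk]
  linear_combination h + (b⁻¹ * q ^ n * q * p.coeff (k + 1) - q ^ n * p.coeff k) *
    mul_inv_cancel₀ (pow_ne_zero k hq) + q ^ n * p.coeff k * mul_inv_cancel₀ hb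

end EigenvalueProblem

lemma pow_sub_one_mul_inv_sub_pow_ne_zero {q b : ℝ} (hq1 : ∀ k : ℤ, k ≠ 0 → q ^ k ≠ 1)
    (hb : b ≠ 0) (hbq : ∀ m : ℤ, b * q ^ m ≠ 1) {n k : ℕ} (hk : k < n) :
    (q ^ (n - k) - 1) * (b⁻¹ - q ^ k) ≠ 0 := by
  refine mul_ne_zero (sub_ne_zero.2 ?_) (sub_ne_zero.2 fun h => hbq k ?_)
  · rw [← zpow_natCast]
    exact hq1 _ (by omega)
  · rw [zpow_natCast, ← h, mul_inv_cancel₀ hb]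

theorem pastro_GEVP_unique_general (q a b : ℝ) (hq : q ≠ 0) (hq1 : ∀ k : ℤ, k ≠ 0 → q ^ k ≠ 1)
    (hb : b ≠ 0)
    (hbq : ∀ m : ℤ, b * q ^ m ≠ 1) (habq : ∀ m : ℤ, a⁻¹ * b * q ^ m ≠ 1)
    (n : ℕ) (p : Polynomial ℝ) (hmonic : p.Monic) (hdeg : p.natDegree = n) (lam : ℝ)
    (heq : ∀ x : ℝ,
      (x - a⁻¹ * q) * p.eval (q * x) + (a⁻¹ * q - b⁻¹ * x) * p.eval x =
        lam * ((x - q) * p.eval (q⁻¹ * x) + (q - b * x) * p.eval x)) :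
    lam = -b⁻¹ * q ^ n ∧ ∀ x : ℝ, p.eval x = pastroP q a b n x := by
  have hlam := eigenvalue_eq_of_monic hq hb hbq heq hmonic hdeg
  have hcoeff : ∀ k ≤ n, p.coeff k = pastroCoeff q a b n k := fun k hk =>
    eq_of_le_of_mul_eq_succ_mul (fun k hk => pow_sub_one_mul_inv_sub_pow_ne_zero hq1 hb hbq hk)
      (fun k hk => coeff_mul_eq_succ_mul_of_eigen hq hb heq hlam hk.le)
      (fun k hk => pastroCoeff_mul_eq_succ_mul hq hq1 hb habq hk)
      ((hdeg ▸ hmonic.coeff_natDegree).trans (pastroCoeff_self hq hq1 hbq habq n).symm) hk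
  refine ⟨hlam, fun x => ?_⟩
  rw [eval_eq_sum_range, hdeg, pastroP]
  exact Finset.sum_congr rfl fun k hk => by
    rw [hcoeff k (Nat.lt_succ_iff.1 (Finset.mem_range.1 hk))]

/-- Any monic polynomial solution of degree `n` of the generalized eigenvalue
problem is the Pastro polynomial `P_n`, with eigenvalue `λ = -b⁻¹ q^n`. -/
theorem pastro_GEVP_unique (q a b : ℝ) (hq : q ≠ 0) (hq1 : ∀ k : ℤ, k ≠ 0 → q ^ k ≠ 1)
    (ha : a ≠ 0) (hb : b ≠ 0)
    (hbq : ∀ m : ℤ, b * q ^ m ≠ 1) (habq : ∀ m : ℤ, a⁻¹ * b * q ^ m ≠ 1)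
    (n : ℕ) (p : Polynomial ℝ) (hmonic : p.Monic) (hdeg : p.natDegree = n) (lam : ℝ)
    (heq : ∀ x : ℝ,
      (x - a⁻¹ * q) * p.eval (q * x) + (a⁻¹ * q - b⁻¹ * x) * p.eval x =
        lam * ((x - q) * p.eval (q⁻¹ * x) + (q - b * x) * p.eval x)) :
    lam = -b⁻¹ * q ^ n ∧ ∀ x : ℝ, p.eval x = pastroP q a b n x :=
  pastro_GEVP_unique_general q a b hq hq1 hb hbq habq n p hmonic hdeg lam heq
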